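/- arXiv:1006.5623 — 4 statements merged into one kernel-verified Lean document; each statement's English description precedes it below -/
import Mathlib

section
/- Let k ∈ ℕ with k ≥ 1 and let F : ℝ → ℝ be smooth and compactly supported. Then as r₀ → ∞, the integral ∫_{1/r₀}^∞ F(λ) λ^{-k} dλ admits an expansion of the form ∑_{j=1}^{k-1} C_j r₀^j + R · log r₀ + C₀ + O(r₀^{-1}) for some constants C₀, …, C_{k-1}, R. -/
open MeasureTheory Filter Asymptotics

lemma measurable_zpow_real (m : ℤ) : Measurable fun l : ℝ => l ^ m := by
  rcases m with m | m
  · simpa using measurable_id.pow_const (α := ℝ) m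
  · simp only [zpow_negSucc]
    exact (measurable_id.pow_const (m + 1)).inv

lemma contOn_zpow (m : ℤ) {s : Set ℝ} (hs : ∀ x ∈ s, x ≠ 0) :
    ContinuousOn (fun l : ℝ => l ^ m) s :=
  (continuousOn_zpow₀ m).mono fun x hx => hs x hx

/-- Lemma `0Renorm`: for `k ≥ 1` and `F` smooth compactly supported, the cutoff integral
`∫_{1/r₀}^∞ F(λ) λ^{-k} dλ` has an expansion `∑_{j=1}^{k-1} C_j r₀^j + R log r₀ + C₀ + O(r₀⁻¹)`
as `r₀ → ∞`. -/
theorem stmt_0 (k : ℕ) (hk : 1 ≤ k) (F : ℝ → ℝ)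
    (hF : ContDiff ℝ (⊤ : ℕ∞) F) (hsupp : HasCompactSupport F) :
    ∃ (C : ℕ → ℝ) (R : ℝ),
      (fun r₀ : ℝ =>
          (∫ l in Set.Ioi (1 / r₀), F l * l ^ (-(k : ℤ)))
            - (∑ j ∈ Finset.Icc 1 (k - 1), C j * r₀ ^ j)
            - R * Real.log r₀ - C 0)
        =O[atTop] fun r₀ : ℝ => r₀⁻¹ := by
  obtain ⟨n, rfl⟩ : ∃ n, k = n + 1 := ⟨k - 1, by omega⟩
  clear hk
  set f : ℝ → ℝ := fun l => F l * l ^ (-((n + 1 : ℕ) : ℤ)) with hfdef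
  set a : ℕ → ℝ := fun j =>
    ((Nat.factorial j : ℝ))⁻¹ * iteratedDerivWithin j F (Set.Icc 0 1) 0 with hadef
  set S : ℝ → ℝ := fun l => ∑ j ∈ Finset.range (n + 1),
    a j * l ^ ((j : ℤ) - ((n + 1 : ℕ) : ℤ)) with hSdef
  set G : ℝ → ℝ := fun l => f l - S l with hGdef
  -- Taylor remainder bound
  have hcd : ContDiffOn ℝ (n + 1 : ℕ) F (Set.Icc 0 1) :=
    (hF.of_le (by exact_mod_cast le_top)).contDiffOn
  obtain ⟨M, hM⟩ := exists_taylor_mean_remainder_bound (zero_le_one (α := ℝ)) hcd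
  have hGbd : ∀ l ∈ Set.Ioc (0 : ℝ) 1, |G l| ≤ M := by
    intro l hl
    have hl0 : (0 : ℝ) < l := hl.1
    have hpow : (0 : ℝ) < l ^ (n + 1) := pow_pos hl0 _
    have h1 : taylorWithinEval F n (Set.Icc 0 1) 0 l
        = ∑ j ∈ Finset.range (n + 1), a j * l ^ j := by
      rw [taylor_within_apply]
      refine Finset.sum_congr rfl fun j _ => ?_
      simp only [hadef, smul_eq_mul, sub_zero]
      ring
    have h2 : |F l - ∑ j ∈ Finset.range (n + 1), a j * l ^ j| ≤ M * l ^ (n + 1) := by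
      have := hM l ⟨hl0.le, hl.2⟩
      rw [h1] at this
      simpa [Real.norm_eq_abs] using this
    have hzp : l ^ (-((n + 1 : ℕ) : ℤ)) = (l ^ (n + 1))⁻¹ := by
      rw [zpow_neg, zpow_natCast]
    have hterm : ∀ j ∈ Finset.range (n + 1),
        a j * l ^ ((j : ℤ) - ((n + 1 : ℕ) : ℤ)) = a j * l ^ j * (l ^ (n + 1))⁻¹ := by
      intro j _
      rw [zpow_sub₀ hl0.ne', zpow_natCast, zpow_natCast, div_eq_mul_inv]
      ring
    have h3 : G l = (F l - ∑ j ∈ Finset.range (n + 1), a j * l ^ j) * (l ^ (n + 1))⁻¹ := by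
      have h3' : G l = F l * (l ^ (n + 1))⁻¹
          - ∑ j ∈ Finset.range (n + 1), a j * l ^ j * (l ^ (n + 1))⁻¹ := by
        simp only [hGdef, hfdef, hSdef, hzp]
        congr 1
        exact Finset.sum_congr rfl hterm
      rw [h3', ← Finset.sum_mul, ← sub_mul]
    rw [h3, abs_mul, abs_inv, abs_of_pos hpow]
    calc |F l - ∑ j ∈ Finset.range (n + 1), a j * l ^ j| * (l ^ (n + 1))⁻¹
        ≤ (M * l ^ (n + 1)) * (l ^ (n + 1))⁻¹ := by
          apply mul_le_mul_of_nonneg_right h2 (by positivity)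
      _ = M := by field_simp
  -- measurability
  have hmf : Measurable f := hF.continuous.measurable.mul (measurable_zpow_real _)
  have hmS : Measurable S := by
    apply Finset.measurable_sum
    intro j _
    exact (measurable_zpow_real _).const_mul _
  have hmG : Measurable G := hmf.sub hmS
  -- integrability of G on (0,1]
  have hintG1 : IntegrableOn G (Set.Ioc (0 : ℝ) 1) := by
    apply Measure.integrableOn_of_bounded (M := M) measure_Ioc_lt_top.ne
      hmG.aestronglyMeasurable
    filter_upwards [ae_restrict_mem measurableSet_Ioc] with l hl
    simpa [Real.norm_eq_abs] using hGbd l hl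
  -- continuity of f away from 0
  have hcont : ∀ s : Set ℝ, (∀ x ∈ s, x ≠ 0) → ContinuousOn f s := fun s hs =>
    (hF.continuous.continuousOn).mul (contOn_zpow _ hs)
  have hcontS : ∀ s : Set ℝ, (∀ x ∈ s, x ≠ 0) → ContinuousOn S s := fun s hs => by
    apply continuousOn_finset_sum
    intro j _
    exact continuousOn_const.mul (contOn_zpow _ hs)
  -- integrability of f on (1, ∞)
  have hint_Ioi1 : IntegrableOn f (Set.Ioi (1 : ℝ)) := by
    obtain ⟨T, hT⟩ := hsupp.isCompact.bddAbove
    have hT1 : (1 : ℝ) ≤ max T 1 := le_max_right _ _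
    rw [← Set.Ioc_union_Ioi_eq_Ioi hT1]
    apply IntegrableOn.union
    · apply IntegrableOn.mono_set _ Set.Ioc_subset_Icc_self
      exact (hcont (Set.Icc 1 (max T 1))
        (fun x hx => (lt_of_lt_of_le one_pos hx.1).ne')).integrableOn_Icc
    · have hz : Set.EqOn (fun _ : ℝ => (0 : ℝ)) f (Set.Ioi (max T 1)) := by
        intro x hx
        have hxF : F x = 0 := by
          apply image_eq_zero_of_notMem_tsupport
          intro hmem
          have h1 := hT hmem
          have h2 : x ≤ max T 1 := le_trans h1 (le_max_left _ _)
          exact absurd hx (not_lt.2 h2)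
        simp [hfdef, hxF]
      exact integrableOn_zero.congr_fun hz measurableSet_Ioi
  have hintf : ∀ c : ℝ, 0 < c → c ≤ 1 → IntegrableOn f (Set.Ioc c 1) := fun c hc hc1 =>
    ((hcont (Set.Icc c 1) fun x hx => (lt_of_lt_of_le hc hx.1).ne').integrableOn_Icc).mono_set
      Set.Ioc_subset_Icc_self
  have hintS : ∀ c : ℝ, 0 < c → c ≤ 1 → IntegrableOn S (Set.Ioc c 1) := fun c hc hc1 =>
    ((hcontS (Set.Icc c 1) fun x hx => (lt_of_lt_of_le hc hx.1).ne').integrableOn_Icc).mono_set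
      Set.Ioc_subset_Icc_self
  -- key identity
  have key : ∀ r : ℝ, 1 ≤ r →
      ∫ l in Set.Ioi (1 / r), f l
        = (∑ j ∈ Finset.range n, a j * (r ^ (n - j) - 1) / ((n : ℝ) - j))
          + a n * Real.log r
          + (∫ l in Set.Ioi (1 : ℝ), f l)
          + (∫ l in Set.Ioc (0 : ℝ) 1, G l)
          - ∫ l in Set.Ioc (0 : ℝ) (1 / r), G l := by
    intro r hr
    have hr0 : (0 : ℝ) < r := lt_of_lt_of_le one_pos hr
    have hc : (0 : ℝ) < 1 / r := by positivity
    have hc1 : 1 / r ≤ 1 := by rw [div_le_one hr0]; exact hr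
    have huIcc : Set.uIcc (1 / r) 1 = Set.Icc (1 / r) 1 := Set.uIcc_of_le hc1
    rw [← Set.Ioc_union_Ioi_eq_Ioi hc1,
      setIntegral_union Set.Ioc_disjoint_Ioi_same measurableSet_Ioi (hintf _ hc hc1)
        hint_Ioi1]
    have h4 : ∫ l in Set.Ioc (1 / r) 1, f l
        = (∫ l in Set.Ioc (1 / r) 1, S l) + ∫ l in Set.Ioc (1 / r) 1, G l := by
      have : ∀ l, f l = S l + G l := fun l => by simp [hGdef]
      simp only [this]
      exact integral_add (hintS _ hc hc1)
        (hintG1.mono_set (Set.Ioc_subset_Ioc hc.le le_rfl))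
    have h5 : (∫ l in Set.Ioc (0 : ℝ) 1, G l)
        = (∫ l in Set.Ioc (0 : ℝ) (1 / r), G l) + ∫ l in Set.Ioc (1 / r) 1, G l := by
      rw [← Set.Ioc_union_Ioc_eq_Ioc hc.le hc1,
        setIntegral_union (Set.Ioc_disjoint_Ioc_of_le le_rfl) measurableSet_Ioc
          (hintG1.mono_set (Set.Ioc_subset_Ioc le_rfl hc1))
          (hintG1.mono_set (Set.Ioc_subset_Ioc hc.le le_rfl))]
    have h6 : ∫ l in Set.Ioc (1 / r) 1, S l
        = (∑ j ∈ Finset.range n, a j * (r ^ (n - j) - 1) / ((n : ℝ) - j))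
          + a n * Real.log r := by
      have hii : ∀ j ∈ Finset.range (n + 1),
          IntervalIntegrable (fun l : ℝ => a j * l ^ ((j : ℤ) - ((n + 1 : ℕ) : ℤ)))
            volume (1 / r) 1 := by
        intro j _
        apply ContinuousOn.intervalIntegrable
        rw [huIcc]
        exact continuousOn_const.mul
          (contOn_zpow _ fun x hx => (lt_of_lt_of_le hc hx.1).ne')
      rw [← intervalIntegral.integral_of_le hc1]
      simp only [hSdef]
      rw [intervalIntegral.integral_finset_sum hii, Finset.sum_range_succ]
      congr 1
      · refine Finset.sum_congr rfl fun j hj => ?_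
        have hjn : j < n := Finset.mem_range.1 hj
        rw [intervalIntegral.integral_const_mul,
          integral_zpow (Or.inr ⟨by push_cast; omega, by
            rw [huIcc]; intro h0; exact absurd h0.1 (not_le.2 hc)⟩)]
        have e1 : (j : ℤ) - ((n + 1 : ℕ) : ℤ) + 1 = (j : ℤ) - n := by push_cast; ring
        rw [e1, one_zpow]
        have e2 : (1 / r) ^ ((j : ℤ) - (n : ℤ)) = r ^ (n - j) := by
          rw [one_div, inv_zpow', neg_sub,
            show (n : ℤ) - (j : ℤ) = ((n - j : ℕ) : ℤ) by omega, zpow_natCast]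
        rw [e2]
        have e3 : ((((j : ℤ) - ((n + 1 : ℕ) : ℤ)) : ℤ) : ℝ) + 1 = (j : ℝ) - n := by
          push_cast; ring
        rw [e3, show ((j : ℝ) - (n : ℝ)) = -((n : ℝ) - (j : ℝ)) from by ring, div_neg]
        ring
      · rw [intervalIntegral.integral_const_mul]
        have e4 : ∀ l : ℝ, l ^ ((n : ℤ) - ((n + 1 : ℕ) : ℤ)) = l⁻¹ := fun l => by
          rw [show (n : ℤ) - ((n + 1 : ℕ) : ℤ) = -1 by push_cast; ring, zpow_neg_one]
        simp only [e4]
        rw [integral_inv_of_pos hc one_pos, one_div_one_div]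
    rw [h4, h6, h5]
    ring
  -- the constants
  set A : ℝ := ∫ l in Set.Ioi (1 : ℝ), f l with hAdef
  set B : ℝ := ∫ l in Set.Ioc (0 : ℝ) 1, G l with hBdef
  refine ⟨fun m => if m = 0 then A + B - ∑ j ∈ Finset.Icc 1 n, a (n - j) / j
    else a (n - m) / m, a n, ?_⟩
  rw [isBigO_iff]
  refine ⟨M, ?_⟩
  filter_upwards [eventually_ge_atTop (1 : ℝ)] with r hr
  have hr0 : (0 : ℝ) < r := lt_of_lt_of_le one_pos hr
  have hc : (0 : ℝ) < 1 / r := by positivity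
  have hc1 : 1 / r ≤ 1 := by rw [div_le_one hr0]; exact hr
  -- reindexing
  have hre : ∑ j ∈ Finset.range n, a j * (r ^ (n - j) - 1) / ((n : ℝ) - j)
      = ∑ j ∈ Finset.Icc 1 n, (a (n - j) / j * r ^ j - a (n - j) / j) := by
    refine Finset.sum_nbij' (fun j => n - j) (fun m => n - m) ?_ ?_ ?_ ?_ ?_
    · intro j hj
      have := Finset.mem_range.1 hj
      simp only [Finset.mem_Icc]
      omega
    · intro m hm
      have := Finset.mem_Icc.1 hm
      simp only [Finset.mem_range]
      omega
    · intro j hj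
      have := Finset.mem_range.1 hj
      omega
    · intro m hm
      have := Finset.mem_Icc.1 hm
      omega
    · intro j hj
      have hjn : j < n := Finset.mem_range.1 hj
      have e1 : n - (n - j) = j := by omega
      have e2 : ((n : ℝ) - j) = ((n - j : ℕ) : ℝ) := by
        push_cast [Nat.cast_sub hjn.le]; ring
      rw [e1, e2]
      ring
  have heq : (∫ l in Set.Ioi (1 / r), f l)
      - (∑ j ∈ Finset.Icc 1 (n + 1 - 1),
          (if j = 0 then A + B - ∑ i ∈ Finset.Icc 1 n, a (n - i) / i
            else a (n - j) / j) * r ^ j)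
      - a n * Real.log r
      - (if (0:ℕ) = 0 then A + B - ∑ i ∈ Finset.Icc 1 n, a (n - i) / i
          else a (n - 0) / (0:ℕ))
      = -∫ l in Set.Ioc (0 : ℝ) (1 / r), G l := by
    rw [key r hr, if_pos rfl]
    have e5 : n + 1 - 1 = n := by omega
    rw [e5]
    have e6 : ∑ j ∈ Finset.Icc 1 n,
        (if j = 0 then A + B - ∑ i ∈ Finset.Icc 1 n, a (n - i) / i
          else a (n - j) / j) * r ^ j
        = ∑ j ∈ Finset.Icc 1 n, a (n - j) / j * r ^ j := by
      refine Finset.sum_congr rfl fun j hj => ?_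
      have := (Finset.mem_Icc.1 hj).1
      rw [if_neg (by omega)]
    rw [e6, hre, Finset.sum_sub_distrib]
    ring
  calc ‖(∫ l in Set.Ioi (1 / r), f l)
      - (∑ j ∈ Finset.Icc 1 (n + 1 - 1),
          (if j = 0 then A + B - ∑ i ∈ Finset.Icc 1 n, a (n - i) / i
            else a (n - j) / j) * r ^ j)
      - a n * Real.log r
      - (if (0:ℕ) = 0 then A + B - ∑ i ∈ Finset.Icc 1 n, a (n - i) / i
          else a (n - 0) / (0:ℕ))‖
      = ‖∫ l in Set.Ioc (0 : ℝ) (1 / r), G l‖ := by rw [heq, norm_neg]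
    _ ≤ M * (volume (Set.Ioc (0 : ℝ) (1 / r))).toReal := by
        apply norm_setIntegral_le_of_norm_le_const measure_Ioc_lt_top
        intro x hx
        have : x ∈ Set.Ioc (0 : ℝ) 1 := ⟨hx.1, le_trans hx.2 hc1⟩
        simpa [Real.norm_eq_abs] using hGbd x this
    _ = M * ‖r⁻¹‖ := by
        rw [Real.volume_Ioc]
        rw [ENNReal.toReal_ofReal (by linarith)]
        rw [Real.norm_eq_abs, abs_of_pos (by positivity : (0:ℝ) < r⁻¹)]
        rw [one_div, sub_zero]
end

section
/- Let α, β, w ∈ ℂ with |α|² + |β|² = 1 and |w| > 1. Then |β|² + |α − \bar{w}β|² ≥ 1/(4|w|²). -/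
/-!
Since `α = (α - w̄ β) + w̄ β`, the triangle inequality gives `|α| ≤ c + |w| b` with
`b = |β|`, `c = |α - w̄ β|`, and Cauchy–Schwarz in `ℝ²` turns this into
`|α|² ≤ (1 + |w|²)(b² + c²)`. Adding `b²` yields `1 ≤ (2 + |w|²)(b² + c²)`, and
`2 + |w|² ≤ 4|w|²` once `|w| ≥ 1`.
-/

lemma add_mul_sq_le_one_add_sq_mul (c b t : ℝ) :
    (c + t * b) ^ 2 ≤ (1 + t ^ 2) * (c ^ 2 + b ^ 2) := by
  nlinarith [sq_nonneg (t * c - b)]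

lemma Complex.norm_sq_le_one_add_norm_sq_mul (α β z : ℂ) :
    ‖α‖ ^ 2 ≤ (1 + ‖z‖ ^ 2) * (‖α - z * β‖ ^ 2 + ‖β‖ ^ 2) := by
  have htri : ‖α‖ ≤ ‖α - z * β‖ + ‖z‖ * ‖β‖ := by
    simpa [norm_mul] using norm_le_norm_sub_add α (z * β)
  calc ‖α‖ ^ 2 ≤ (‖α - z * β‖ + ‖z‖ * ‖β‖) ^ 2 := by gcongr
    _ ≤ _ := add_mul_sq_le_one_add_sq_mul _ _ _

lemma Complex.norm_sq_add_norm_sq_le (α β z : ℂ) :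
    ‖α‖ ^ 2 + ‖β‖ ^ 2 ≤ (2 + ‖z‖ ^ 2) * (‖β‖ ^ 2 + ‖α - z * β‖ ^ 2) := by
  nlinarith [Complex.norm_sq_le_one_add_norm_sq_mul α β z, sq_nonneg ‖z‖, sq_nonneg ‖β‖,
    sq_nonneg ‖α - z * β‖]

/-- If `|α|² + |β|² = 1` and `|w| > 1`, then `|β|² + |α − conj(w) β|² ≥ 1/(4|w|²)`. -/
theorem stmt_2 (α β w : ℂ) (h : ‖α‖ ^ 2 + ‖β‖ ^ 2 = 1)
    (hw : 1 < ‖w‖) :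
    1 / (4 * ‖w‖ ^ 2) ≤
      ‖β‖ ^ 2 + ‖α - (starRingEnd ℂ) w * β‖ ^ 2 := by
  have hbound := Complex.norm_sq_add_norm_sq_le α β ((starRingEnd ℂ) w)
  rw [Complex.norm_conj, h] at hbound
  calc 1 / (4 * ‖w‖ ^ 2) ≤ 1 / (2 + ‖w‖ ^ 2) :=
        one_div_le_one_div_of_le (by positivity) (by nlinarith)
    _ ≤ _ := by rwa [div_le_iff₀ (by positivity), mul_comm]
end

section
/- Let P : ℂ → ℂ be a polynomial of degree m ≥ 1 whose leading coefficient is nonzero and which is nonvanishing on ℝ, with |P(ξ)| ≥ C'(1+|ξ|)^m for ξ ∈ ℝ for some C' > 0. Then there exists θ > 0 such that P(ζ) ≠ 0 for all ζ in the strip {ζ ∈ ℂ : |Im ζ| < θ}, and there exist constants c, C > 0 with C(1+|ζ|)^m ≥ |P(ζ)| ≥ c(1+|ζ|)^m on this strip. -/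
/-!
Over `ℂ` the polynomial factors as `P = lc ∏ (X - r)` over its roots, so it suffices to bound each
factor `‖ζ - r‖` above and below by multiples of `1 + ‖ζ‖`. The upper bound is the triangle
inequality. Since `P` has no real zeros, every root lies at distance at least `2θ` from the real
axis for some `θ > 0`; on the strip `|Im ζ| < θ` this gives `‖ζ - r‖ ≥ θ`, and together with
`‖ζ - r‖ ≥ ‖ζ‖ - ‖r‖` it yields `‖ζ - r‖ ≥ δ (1 + ‖ζ‖)` with `δ > 0` depending only on `θ` and
the size of the roots.
-/

open Polynomial Filter Topology NNReal

theorem Finset.exists_pos_forall_le {ι : Type*} (s : Finset ι) {f : ι → ℝ}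
    (hf : ∀ i ∈ s, 0 < f i) : ∃ ε > 0, ∀ i ∈ s, ε ≤ f i := by
  have hsmall : ∀ᶠ ε in 𝓝[>] (0 : ℝ), ∀ i ∈ s, ε ≤ f i :=
    (eventually_all_finset s).2 fun i hi =>
      ((eventually_lt_nhds (hf i hi)).mono fun _ h => h.le).filter_mono nhdsWithin_le_nhds
  exact (hsmall.and self_mem_nhdsWithin).exists.imp fun ε h => ⟨h.2, h.1⟩

theorem Polynomial.im_ne_zero_of_mem_roots {P : ℂ[X]} (hreal : ∀ ξ : ℝ, P.eval (ξ : ℂ) ≠ 0)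
    {r : ℂ} (hr : r ∈ P.roots) : r.im ≠ 0 := fun him =>
  hreal r.re <| by
    rw [show (r.re : ℂ) = r from Complex.ext (by simp) (by simp [him])]
    exact isRoot_of_mem_roots hr

section Splits
variable {K : Type*} [NormedField K] {P : K[X]}

theorem Polynomial.Splits.nnnorm_eval_eq (hP : P.Splits) (z : K) :
    ‖P.eval z‖₊ = ‖P.leadingCoeff‖₊ * (P.roots.map fun r => ‖z - r‖₊).prod := by
  rw [hP.eval_eq_prod_roots, nnnorm_mul, ← nnnormHom_apply (α := K) (_ : Multiset K).prod,
    map_multiset_prod, Multiset.map_map]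
  rfl

theorem Polynomial.Splits.le_norm_eval (hP : P.Splits) {z : K} {a : ℝ} (ha : 0 ≤ a)
    (h : ∀ r ∈ P.roots, a ≤ ‖z - r‖) : ‖P.leadingCoeff‖ * a ^ P.natDegree ≤ ‖P.eval z‖ := by
  lift a to ℝ≥0 using ha
  suffices ‖P.leadingCoeff‖₊ * a ^ P.natDegree ≤ ‖P.eval z‖₊ by exact_mod_cast this
  rw [hP.nnnorm_eval_eq, hP.natDegree_eq_card_roots, ← Multiset.card_map fun r => ‖z - r‖₊]
  gcongr
  exact Multiset.pow_card_le_prod <| Multiset.forall_mem_map_iff.2 h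

theorem Polynomial.Splits.norm_eval_le (hP : P.Splits) {z : K} {b : ℝ} (hb : 0 ≤ b)
    (h : ∀ r ∈ P.roots, ‖z - r‖ ≤ b) : ‖P.eval z‖ ≤ ‖P.leadingCoeff‖ * b ^ P.natDegree := by
  lift b to ℝ≥0 using hb
  suffices ‖P.eval z‖₊ ≤ ‖P.leadingCoeff‖₊ * b ^ P.natDegree by exact_mod_cast this
  rw [hP.nnnorm_eval_eq, hP.natDegree_eq_card_roots, ← Multiset.card_map fun r => ‖z - r‖₊]
  gcongr
  exact Multiset.prod_le_pow_card _ _ <| Multiset.forall_mem_map_iff.2 h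

end Splits

section NormSub
variable {E : Type*} [SeminormedAddCommGroup E] {x r : E} {R : ℝ}

theorem norm_sub_le_one_add_mul_one_add_norm (hr : ‖r‖ ≤ R) :
    ‖x - r‖ ≤ (1 + R) * (1 + ‖x‖) := by
  nlinarith [norm_sub_le x r, norm_nonneg x, norm_nonneg r]

/-- The weight `a / (1 + R + a)` is the one for which the convex combination of `a ≤ ‖x - r‖` and
`‖x‖ - R ≤ ‖x - r‖` is exactly `a / (1 + R + a) * (1 + ‖x‖)`. -/
theorem div_mul_one_add_norm_le_norm_sub {a : ℝ} (ha : 0 < a) (hr : ‖r‖ ≤ R)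
    (hxr : a ≤ ‖x - r‖) : a / (1 + R + a) * (1 + ‖x‖) ≤ ‖x - r‖ := by
  have hden : 0 < 1 + R + a := by linarith [norm_nonneg r]
  rw [div_mul_eq_mul_div, div_le_iff₀ hden]
  have hy : ‖x‖ - R ≤ ‖x - r‖ := by linarith [norm_sub_norm_le x r]
  nlinarith [mul_le_mul_of_nonneg_left hy ha.le, norm_nonneg r]

end NormSub

theorem Complex.le_norm_sub_of_abs_im_le {θ : ℝ} {ζ r : ℂ} (hζ : |ζ.im| ≤ θ)
    (hr : 2 * θ ≤ |r.im|) : θ ≤ ‖ζ - r‖ :=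
  calc θ ≤ |r.im| - |ζ.im| := by linarith
    _ ≤ |(ζ - r).im| := by rw [sub_im, abs_sub_comm]; exact abs_sub_abs_le_abs_sub _ _
    _ ≤ ‖ζ - r‖ := abs_im_le_norm _

theorem stmt_12_general (P : Polynomial ℂ) (m : ℕ)
    (hdeg : P.natDegree = m) (hlead : P.leadingCoeff ≠ 0)
    (hreal : ∀ ξ : ℝ, P.eval (ξ : ℂ) ≠ 0) :
    ∃ θ > 0, (∀ ζ : ℂ, |ζ.im| < θ → P.eval ζ ≠ 0) ∧
      ∃ c > 0, ∃ C > 0, ∀ ζ : ℂ, |ζ.im| < θ →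
        c * (1 + ‖ζ‖) ^ m ≤ ‖P.eval ζ‖ ∧
          ‖P.eval ζ‖ ≤ C * (1 + ‖ζ‖) ^ m := by
  have hP : P.Splits := IsAlgClosed.splits P
  obtain ⟨θ, hθ, hθroots⟩ : ∃ θ > 0, ∀ r ∈ P.roots.toFinset, θ ≤ |r.im| / 2 :=
    P.roots.toFinset.exists_pos_forall_le fun r hr =>
      half_pos (abs_pos.2 (im_ne_zero_of_mem_roots hreal (Multiset.mem_toFinset.1 hr)))
  obtain ⟨R, hR, hRroots⟩ : ∃ R ≥ 0, ∀ r ∈ P.roots.toFinset, ‖r‖ ≤ R :=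
    ((eventually_ge_atTop 0).and
      ((eventually_all_finset _).2 fun r _ => eventually_ge_atTop ‖r‖)).exists
  have hlc : 0 < ‖P.leadingCoeff‖ := norm_pos_iff.2 hlead
  set δ := θ / (1 + R + θ)
  have hlower : ∀ ζ : ℂ, |ζ.im| < θ → ‖P.leadingCoeff‖ * δ ^ m * (1 + ‖ζ‖) ^ m ≤ ‖P.eval ζ‖ := by
    intro ζ hζ
    rw [mul_assoc, ← mul_pow, ← hdeg]
    refine hP.le_norm_eval (by positivity) fun r hr => ?_
    have hr' := Multiset.mem_toFinset.2 hr
    exact div_mul_one_add_norm_le_norm_sub hθ (hRroots r hr')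
      (Complex.le_norm_sub_of_abs_im_le hζ.le (by linarith [hθroots r hr']))
  refine ⟨θ, hθ, fun ζ hζ => ?_, ‖P.leadingCoeff‖ * δ ^ m, by positivity,
    ‖P.leadingCoeff‖ * (1 + R) ^ m, by positivity, fun ζ hζ => ⟨hlower ζ hζ, ?_⟩⟩
  · exact norm_pos_iff.1 <| lt_of_lt_of_le (by positivity) (hlower ζ hζ)
  · rw [mul_assoc, ← mul_pow, ← hdeg]
    exact hP.norm_eval_le (by positivity) fun r hr =>
      norm_sub_le_one_add_mul_one_add_norm (hRroots r (Multiset.mem_toFinset.2 hr))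

/-- An elliptic polynomial symbol of degree `m` nonvanishing on the real axis
remains nonvanishing and elliptically bounded on a complex strip `{|Im ζ| < θ}`. -/
theorem stmt_12 (P : Polynomial ℂ) (m : ℕ) (hm : 1 ≤ m)
    (hdeg : P.natDegree = m) (hlead : P.leadingCoeff ≠ 0)
    (C' : ℝ) (hC' : 0 < C')
    (hreal : ∀ ξ : ℝ, P.eval (ξ : ℂ) ≠ 0)
    (hlow : ∀ ξ : ℝ, C' * (1 + |ξ|) ^ m ≤ ‖P.eval (ξ : ℂ)‖) :
    ∃ θ > 0, (∀ ζ : ℂ, |ζ.im| < θ → P.eval ζ ≠ 0) ∧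
      ∃ c > 0, ∃ C > 0, ∀ ζ : ℂ, |ζ.im| < θ →
        c * (1 + ‖ζ‖) ^ m ≤ ‖P.eval ζ‖ ∧
          ‖P.eval ζ‖ ≤ C * (1 + ‖ζ‖) ^ m :=
  stmt_12_general P m hdeg hlead hreal
end

section
/- For w ∈ ℂ with w ≠ 0 and r₀ > 0, define S⁺_w = {−(r₀ e^{iφ} \bar{w})/|w| − λ\bar{w} : −π/2 ≤ φ ≤ π/2, 0 ≤ λ ≤ 1} and S⁻_w = {−(r₀ e^{iφ} \bar{w})/|w| − λ\bar{w} : π/2 ≤ φ ≤ 3π/2, 0 ≤ λ ≤ 1}. Then, up to sets of Lebesgue measure zero, S⁺_w \\ S⁻_w = B(−\bar{w}, r₀) \\ B(0, r₀) and S⁻_w \\ S⁺_w = B(0, r₀) \\ B(−\bar{w}, r₀). -/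
/-!
Multiplying by the unit `-w / ‖w‖` sends `-w̄` to `a = ‖w‖ > 0` and `S^±_w` to the right and left
half circles of radius `r₀` about `0`, swept along the segment `[0, a]`. On the horizontal line
of height `y` with `y² ≤ r₀²`, put `s = √(r₀² - y²)`: a point `x + iy` lies in the swept right
half circle iff `x - s ∈ [0, a]`, in the swept left one iff `x + s ∈ [0, a]`, and in the disk
`B(t, r₀)` (`t` real) iff `|x - t| < s`. Comparing these conditions is elementary order
reasoning, valid off the circles `|z - a| = r₀` resp. `|z| = r₀`, which are Lebesgue-null.
-/

open MeasureTheory Complex Set Metric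
open scoped Real ComplexConjugate

lemma measure_symmDiff_eq_zero_of_forall_notMem {α : Type*} [MeasurableSpace α] {μ : Measure α}
    {s t N : Set α} (hN : μ N = 0) (h : ∀ x ∉ N, x ∈ s ↔ x ∈ t) : μ (symmDiff s t) = 0 :=
  measure_mono_null (fun x hx => by_contra fun hxN => by rw [mem_symmDiff, h x hxN] at hx; tauto) hN

lemma exists_mem_Icc_neg_pi_div_two_eq_mul_exp_iff {r : ℝ} (hr : 0 ≤ r) (v : ℂ) :
    (∃ φ ∈ Icc (-(π / 2)) (π / 2), v = r * exp (φ * I)) ↔ ‖v‖ = r ∧ 0 ≤ v.re := by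
  constructor
  · rintro ⟨φ, hφ, rfl⟩
    refine ⟨by simp [abs_of_nonneg hr], ?_⟩
    simpa using mul_nonneg hr (Real.cos_nonneg_of_mem_Icc hφ)
  · rintro ⟨rfl, hre⟩
    exact ⟨arg v, abs_le.1 (abs_arg_le_pi_div_two_iff.2 hre), (norm_mul_exp_arg_mul_I v).symm⟩

lemma exists_mem_Icc_pi_div_two_eq_mul_exp_iff {r : ℝ} (hr : 0 ≤ r) (v : ℂ) :
    (∃ φ ∈ Icc (π / 2) (3 * π / 2), v = r * exp (φ * I)) ↔ ‖v‖ = r ∧ v.re ≤ 0 := by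
  constructor
  · rintro ⟨φ, hφ, rfl⟩
    refine ⟨by simp [abs_of_nonneg hr], ?_⟩
    simpa using mul_nonpos_of_nonneg_of_nonpos hr
      (Real.cos_nonpos_of_pi_div_two_le_of_le hφ.1 (by linarith [hφ.2]))
  · rintro ⟨rfl, hre⟩
    have hψ := abs_le.1 (abs_arg_le_pi_div_two_iff.2 (by simpa using hre : 0 ≤ (-v).re))
    refine ⟨arg (-v) + π, ⟨by linarith, by linarith⟩, ?_⟩
    rw [ofReal_add, add_mul, exp_add, exp_pi_mul_I, mul_neg_one, mul_neg, ← norm_neg v,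
      norm_mul_exp_arg_mul_I, neg_neg]

lemma norm_sub_ofReal_sq (z : ℂ) (t : ℝ) : ‖z - t‖ ^ 2 = (z.re - t) ^ 2 + z.im ^ 2 := by
  rw [Complex.sq_norm, normSq_apply]
  simp only [sub_re, ofReal_re, sub_im, ofReal_im, sub_zero]
  ring

lemma norm_sub_ofReal_lt_iff {r : ℝ} (hr : 0 ≤ r) (z : ℂ) (t : ℝ) :
    ‖z - t‖ < r ↔ |z.re - t| < √(r ^ 2 - z.im ^ 2) := by
  rw [Real.lt_sqrt (abs_nonneg _), sq_abs, ← pow_lt_pow_iff_left₀ (norm_nonneg _) hr two_ne_zero,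
    norm_sub_ofReal_sq, lt_sub_iff_add_lt]

lemma norm_sub_ofReal_eq_iff {r : ℝ} (hr : 0 ≤ r) (z : ℂ) (t : ℝ) :
    ‖z - t‖ = r ↔ z.im ^ 2 ≤ r ^ 2 ∧ |z.re - t| = √(r ^ 2 - z.im ^ 2) := by
  rw [← sq_eq_sq₀ (norm_nonneg _) hr, norm_sub_ofReal_sq]
  constructor
  · intro h
    have hy : z.im ^ 2 ≤ r ^ 2 := by nlinarith [sq_nonneg (z.re - t)]
    refine ⟨hy, ?_⟩
    rw [eq_comm, Real.sqrt_eq_iff_eq_sq (by linarith) (abs_nonneg _), sq_abs]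
    linarith
  · rintro ⟨hy, h⟩
    rw [← sq_abs, h, Real.sq_sqrt (by linarith)]
    ring

/-- In the rotated frame, `S⁺_w` and `S⁻_w` are `arcSweep r₀ ‖w‖ J` for the two angle ranges `J`. -/
def arcSweep (r a : ℝ) (J : Set ℝ) : Set ℂ :=
  {z | ∃ φ ∈ J, ∃ t ∈ Icc 0 a, z = r * exp (φ * I) + t}

lemma mem_arcSweep_iff {r a : ℝ} {J : Set ℝ} {z : ℂ} :
    z ∈ arcSweep r a J ↔ ∃ t ∈ Icc 0 a, ∃ φ ∈ J, z - t = r * exp (φ * I) := by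
  simp only [arcSweep, mem_ofPred_eq, sub_eq_iff_eq_add]
  exact ⟨fun ⟨φ, hφ, t, ht, h⟩ => ⟨t, ht, φ, hφ, h⟩, fun ⟨t, ht, φ, hφ, h⟩ => ⟨φ, hφ, t, ht, h⟩⟩

lemma mem_arcSweep_right_iff {r : ℝ} (hr : 0 ≤ r) (a : ℝ) (z : ℂ) :
    z ∈ arcSweep r a (Icc (-(π / 2)) (π / 2)) ↔
      z.im ^ 2 ≤ r ^ 2 ∧ z.re - √(r ^ 2 - z.im ^ 2) ∈ Icc 0 a := by
  simp only [mem_arcSweep_iff, exists_mem_Icc_neg_pi_div_two_eq_mul_exp_iff hr,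
    norm_sub_ofReal_eq_iff hr, sub_re, ofReal_re, sub_nonneg]
  constructor
  · rintro ⟨t, ht, ⟨hy, hs⟩, hre⟩
    rw [abs_of_nonneg (sub_nonneg.2 hre)] at hs
    exact ⟨hy, by rwa [← hs, sub_sub_cancel]⟩
  · rintro ⟨hy, ht⟩
    refine ⟨_, ht, ⟨hy, ?_⟩, ?_⟩
    · rw [sub_sub_cancel, abs_of_nonneg (Real.sqrt_nonneg _)]
    · linarith [Real.sqrt_nonneg (r ^ 2 - z.im ^ 2)]

lemma mem_arcSweep_left_iff {r : ℝ} (hr : 0 ≤ r) (a : ℝ) (z : ℂ) :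
    z ∈ arcSweep r a (Icc (π / 2) (3 * π / 2)) ↔
      z.im ^ 2 ≤ r ^ 2 ∧ z.re + √(r ^ 2 - z.im ^ 2) ∈ Icc 0 a := by
  simp only [mem_arcSweep_iff, exists_mem_Icc_pi_div_two_eq_mul_exp_iff hr,
    norm_sub_ofReal_eq_iff hr, sub_re, ofReal_re, sub_nonpos]
  constructor
  · rintro ⟨t, ht, ⟨hy, hs⟩, hre⟩
    rw [abs_of_nonpos (sub_nonpos.2 hre)] at hs
    exact ⟨hy, by rwa [← hs, neg_sub, add_sub_cancel]⟩
  · rintro ⟨hy, ht⟩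
    refine ⟨_, ht, ⟨hy, ?_⟩, ?_⟩
    · rw [sub_add_cancel_left, abs_neg, abs_of_nonneg (Real.sqrt_nonneg _)]
    · linarith [Real.sqrt_nonneg (r ^ 2 - z.im ^ 2)]

lemma sub_mem_Icc_and_add_notMem_Icc_iff {x s a : ℝ} (hs : 0 ≤ s) (ha : 0 ≤ a)
    (h : |x - a| ≠ s) : (x - s ∈ Icc 0 a ∧ x + s ∉ Icc 0 a) ↔ (|x - a| < s ∧ ¬|x| < s) := by
  simp only [mem_Icc, abs_lt, ne_eq] at h ⊢
  grind

lemma add_mem_Icc_and_sub_notMem_Icc_iff {x s a : ℝ} (hs : 0 ≤ s) (ha : 0 ≤ a)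
    (h : |x| ≠ s) : (x + s ∈ Icc 0 a ∧ x - s ∉ Icc 0 a) ↔ (|x| < s ∧ ¬|x - a| < s) := by
  simp only [mem_Icc, abs_lt, ne_eq] at h ⊢
  grind

lemma mem_arcSweep_right_diff_left_iff {r a : ℝ} (hr : 0 ≤ r) (ha : 0 ≤ a) {z : ℂ}
    (hz : z ∉ sphere (a : ℂ) r) :
    z ∈ arcSweep r a (Icc (-(π / 2)) (π / 2)) \ arcSweep r a (Icc (π / 2) (3 * π / 2)) ↔
      z ∈ ball (a : ℂ) r \ ball 0 r := by
  rw [mem_sphere, dist_eq_norm, norm_sub_ofReal_eq_iff hr] at hz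
  rw [← ofReal_zero]
  simp only [mem_sdiff, mem_arcSweep_right_iff hr, mem_arcSweep_left_iff hr, mem_ball,
    dist_eq_norm, norm_sub_ofReal_lt_iff hr, sub_zero]
  by_cases hy : z.im ^ 2 ≤ r ^ 2
  · simp only [hy, true_and]
    exact sub_mem_Icc_and_add_notMem_Icc_iff (Real.sqrt_nonneg _) ha fun h => hz ⟨hy, h⟩
  · simp [hy, Real.sqrt_eq_zero'.2 (sub_nonpos.2 (not_le.1 hy).le)]

lemma mem_arcSweep_left_diff_right_iff {r a : ℝ} (hr : 0 ≤ r) (ha : 0 ≤ a) {z : ℂ}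
    (hz : z ∉ sphere 0 r) :
    z ∈ arcSweep r a (Icc (π / 2) (3 * π / 2)) \ arcSweep r a (Icc (-(π / 2)) (π / 2)) ↔
      z ∈ ball 0 r \ ball (a : ℂ) r := by
  rw [← ofReal_zero] at hz ⊢
  rw [mem_sphere, dist_eq_norm, norm_sub_ofReal_eq_iff hr, sub_zero] at hz
  simp only [mem_sdiff, mem_arcSweep_right_iff hr, mem_arcSweep_left_iff hr, mem_ball,
    dist_eq_norm, norm_sub_ofReal_lt_iff hr, sub_zero]
  by_cases hy : z.im ^ 2 ≤ r ^ 2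
  · simp only [hy, true_and]
    exact add_mem_Icc_and_sub_notMem_Icc_iff (Real.sqrt_nonneg _) ha fun h => hz ⟨hy, h⟩
  · simp [hy, Real.sqrt_eq_zero'.2 (sub_nonpos.2 (not_le.1 hy).le)]

lemma dist_mul_mul_of_norm_eq_one {u : ℂ} (hu : ‖u‖ = 1) (z c : ℂ) :
    dist (u * z) (u * c) = dist z c := by
  rw [dist_eq_norm, dist_eq_norm, ← mul_sub, norm_mul, hu, one_mul]

lemma neg_div_norm_mul_mem_arcSweep_iff {w : ℂ} (hw : w ≠ 0) (r : ℝ) (J : Set ℝ) (z : ℂ) :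
    -(w / ‖w‖) * z ∈ arcSweep r ‖w‖ J ↔ ∃ φ ∈ J, ∃ lam ∈ Icc (0 : ℝ) 1,
      z = -((r : ℂ) * exp (φ * I) * conj w) / (‖w‖ : ℂ) - (lam : ℂ) * conj w := by
  have hn : (‖w‖ : ℂ) ≠ 0 := ofReal_ne_zero.2 (norm_ne_zero_iff.2 hw)
  have hinv : (-(w / ‖w‖))⁻¹ = -(conj w / ‖w‖) := by
    rw [inv_neg, inv_div, neg_inj, div_eq_div_iff hw hn, mul_comm (conj w), mul_conj', sq]
  have hIcc : Icc 0 ‖w‖ = (· * ‖w‖) '' Icc 0 1 := by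
    rw [image_mul_right_Icc zero_le_one (norm_nonneg w), zero_mul, one_mul]
  have hexpr (φ lam : ℝ) : -((r : ℂ) * exp (φ * I) * conj w) / (‖w‖ : ℂ) - (lam : ℂ) * conj w =
      -(conj w / ‖w‖) * (r * exp (φ * I) + ↑(lam * ‖w‖)) := by
    push_cast
    field_simp
    ring
  simp only [arcSweep, mem_ofPred_eq, hIcc, exists_mem_image, hexpr, ← hinv,
    eq_inv_mul_iff_mul_eq₀ (neg_ne_zero.2 (div_ne_zero hw hn))]

/-- Parametrization of the symmetric difference of the two disks `B(−w̄, r₀)` and `B(0, r₀)`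
by the sets `S⁺_w`, `S⁻_w`: up to Lebesgue-null sets, `S⁺_w \ S⁻_w = B(−w̄, r₀) \ B(0, r₀)`
and `S⁻_w \ S⁺_w = B(0, r₀) \ B(−w̄, r₀)`. -/
theorem stmt_13 (w : ℂ) (hw : w ≠ 0) (r₀ : ℝ) (hr₀ : 0 < r₀) :
    (volume (symmDiff
        (({z : ℂ | ∃ φ ∈ Set.Icc (-(Real.pi / 2)) (Real.pi / 2), ∃ lam ∈ Set.Icc (0 : ℝ) 1,
            z = -((r₀ : ℂ) * Complex.exp ((φ : ℂ) * Complex.I) * (starRingEnd ℂ) w)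
                  / (‖w‖ : ℂ) - (lam : ℂ) * (starRingEnd ℂ) w}) \
         ({z : ℂ | ∃ φ ∈ Set.Icc (Real.pi / 2) (3 * Real.pi / 2), ∃ lam ∈ Set.Icc (0 : ℝ) 1,
            z = -((r₀ : ℂ) * Complex.exp ((φ : ℂ) * Complex.I) * (starRingEnd ℂ) w)
                  / (‖w‖ : ℂ) - (lam : ℂ) * (starRingEnd ℂ) w}))
        (Metric.ball (-(starRingEnd ℂ) w) r₀ \ Metric.ball 0 r₀)) = 0) ∧
    (volume (symmDiff
        (({z : ℂ | ∃ φ ∈ Set.Icc (Real.pi / 2) (3 * Real.pi / 2), ∃ lam ∈ Set.Icc (0 : ℝ) 1,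
            z = -((r₀ : ℂ) * Complex.exp ((φ : ℂ) * Complex.I) * (starRingEnd ℂ) w)
                  / (‖w‖ : ℂ) - (lam : ℂ) * (starRingEnd ℂ) w}) \
         ({z : ℂ | ∃ φ ∈ Set.Icc (-(Real.pi / 2)) (Real.pi / 2), ∃ lam ∈ Set.Icc (0 : ℝ) 1,
            z = -((r₀ : ℂ) * Complex.exp ((φ : ℂ) * Complex.I) * (starRingEnd ℂ) w)
                  / (‖w‖ : ℂ) - (lam : ℂ) * (starRingEnd ℂ) w}))
        (Metric.ball 0 r₀ \ Metric.ball (-(starRingEnd ℂ) w) r₀)) = 0) := by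
  set u : ℂ := -(w / ‖w‖)
  have hu : ‖u‖ = 1 := by simp [u, hw]
  have hcenter : u * -conj w = ‖w‖ := by
    rw [neg_mul_neg, div_mul_eq_mul_div, mul_conj', sq, mul_div_cancel_right₀ _ (by simpa using hw)]
  have hball (z c : ℂ) : u * z ∈ ball (u * c) r₀ ↔ z ∈ ball c r₀ := by
    rw [mem_ball, mem_ball, dist_mul_mul_of_norm_eq_one hu]
  have hsphere (z c : ℂ) : u * z ∈ sphere (u * c) r₀ ↔ z ∈ sphere c r₀ := by
    rw [mem_sphere, mem_sphere, dist_mul_mul_of_norm_eq_one hu]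
  have hzero : (0 : ℂ) = u * 0 := (mul_zero u).symm
  refine ⟨measure_symmDiff_eq_zero_of_forall_notMem
    (Measure.addHaar_sphere volume (-conj w) r₀) fun z hz => ?_,
    measure_symmDiff_eq_zero_of_forall_notMem (Measure.addHaar_sphere volume 0 r₀) fun z hz => ?_⟩
  · have := mem_arcSweep_right_diff_left_iff hr₀.le (norm_nonneg w) (z := u * z)
      (by rwa [← hcenter, hsphere])
    rw [← hcenter, hzero, mem_sdiff, mem_sdiff, hball, hball] at this
    simpa only [mem_sdiff, mem_ofPred_eq, u, neg_div_norm_mul_mem_arcSweep_iff hw] using this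
  · have := mem_arcSweep_left_diff_right_iff hr₀.le (norm_nonneg w) (z := u * z)
      (by rwa [hzero, hsphere])
    rw [← hcenter, hzero, mem_sdiff, mem_sdiff, hball, hball] at this
    simpa only [mem_sdiff, mem_ofPred_eq, u, neg_div_norm_mul_mem_arcSweep_iff hw] using this
end
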